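/- Let U ∈ ℝ_max^{n×n}, g ∈ ℝ_max^n and h ∈ (ℝ ∪ {+∞})^n, and let U* = I ⊕ U ⊕ ⋯ ⊕ U^{n−1}. Then the set P = { x ∈ ℝ^n : g ≤ x ≤ h and U ⊗ x ≤ x } is nonempty if and only if ρ(U) ≤ 0 and U* ⊗ g ≤ h. -/

import Mathlib

/-- Max-plus identity matrix: `0` on the diagonal, `−∞` off it. -/
noncomputable def mpId (n : ℕ) : Fin n → Fin n → EReal := fun i j => if i = j then 0 else ⊥

/-- Max-plus matrix product. -/
noncomputable def mpMul {n : ℕ} (A B : Fin n → Fin n → EReal) : Fin n → Fin n → EReal :=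
  fun i j => ⨆ k, A i k + B k j

/-- Max-plus matrix powers, `A^0 = I`. -/
noncomputable def mpPow {n : ℕ} (A : Fin n → Fin n → EReal) : ℕ → Fin n → Fin n → EReal
  | 0 => mpId n
  | k + 1 => mpMul (mpPow A k) A

/-- Kleene star truncation `A* = I ⊕ A ⊕ ⋯ ⊕ A^{n−1}` (entrywise maximum). -/
noncomputable def mpStar {n : ℕ} (A : Fin n → Fin n → EReal) : Fin n → Fin n → EReal :=
  fun i j => ⨆ k : Fin n, mpPow A (k : ℕ) i j

/-- Maximum cycle mean `ρ(A)`: the supremum, over all closed walks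
`f 0, f 1, …, f k = f 0` (`k ≥ 1`), of the mean weight of the walk.  A walk using
a `−∞` arc has mean `−∞`, so this equals the maximum mean over elementary cycles
of the digraph of finite entries, and it is `−∞` when that digraph is acyclic. -/
noncomputable def rho {n : ℕ} (A : Fin n → Fin n → EReal) : EReal :=
  ⨆ (k : ℕ) (_ : 0 < k) (f : ℕ → Fin n) (_ : f k = f 0),
    (((k : ℝ)⁻¹ : ℝ) : EReal) * ∑ i ∈ Finset.range k, A (f i) (f (i + 1))

/-!
A real vector `x` with `U ⊗ x ≤ x` forces `U^m ⊗ x ≤ x` for every `m`, hence every closed walk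
has nonpositive weight and `g ≤ x` gives `U* ⊗ g ≤ U* ⊗ x ≤ x ≤ h`. Conversely, if all closed
walks are nonpositive, cutting cycles out of a walk does not lower its weight, so every walk is
dominated by a walk of length `< n`; thus `U ⊗ U* ≤ U*` and `y = U* ⊗ (g ⊕ t)` satisfies
`U ⊗ y ≤ y` and `g ≤ y`. Since `U*` has no `+∞` entry, a small enough real `t` keeps `y ≤ h`
and makes `y` finite.
-/

open Filter Finset

theorem Monotone.map_iSup_of_finite {ι α β : Type*} [Finite ι] [Nonempty ι]
    [CompleteLinearOrder α] [CompleteLattice β] {φ : α → β} (hφ : Monotone φ) (F : ι → α) :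
    φ (⨆ i, F i) = ⨆ i, φ (F i) := by
  obtain ⟨i, hi⟩ := exists_eq_ciSup_of_finite (f := F)
  refine le_antisymm ?_ (iSup_le fun j => hφ (le_iSup F j))
  rw [← hi]
  exact le_iSup (φ ∘ F) i

namespace EReal

theorem iSup_add_of_finite {ι : Type*} [Finite ι] [Nonempty ι] (F : ι → EReal) (a : EReal) :
    (⨆ i, F i) + a = ⨆ i, F i + a :=
  (add_left_mono (a := a)).map_iSup_of_finite F

theorem add_iSup_of_finite {ι : Type*} [Finite ι] [Nonempty ι] (F : ι → EReal) (a : EReal) :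
    a + ⨆ i, F i = ⨆ i, a + F i :=
  (add_right_mono (a := a)).map_iSup_of_finite F

theorem iSup_ne_top_of_finite {ι : Type*} [Finite ι] {F : ι → EReal} (hF : ∀ i, F i ≠ ⊤) :
    (⨆ i, F i) ≠ ⊤ := by
  cases isEmpty_or_nonempty ι
  · simp
  · obtain ⟨i, hi⟩ := exists_eq_ciSup_of_finite (f := F)
    exact hi ▸ hF i

theorem eventually_add_coe_le {a b : EReal} (ha : a ≠ ⊤) (hb : b ≠ ⊥) :
    ∀ᶠ t : ℝ in atBot, a + t ≤ b := by
  induction a using EReal.rec with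
  | bot => exact Eventually.of_forall fun t => by simp
  | top => exact absurd rfl ha
  | coe r =>
    induction b using EReal.rec with
    | bot => exact absurd rfl hb
    | top => exact Eventually.of_forall fun _ => le_top
    | coe s =>
      filter_upwards [eventually_le_atBot (s - r)] with t ht
      exact_mod_cast (by linarith : r + t ≤ s)

end EReal

section

variable {n : ℕ}

/-- The max-plus matrix-vector product `A ⊗ x`. -/
noncomputable def mpMulVec (A : Fin n → Fin n → EReal) (x : Fin n → EReal) : Fin n → EReal :=
  fun i => ⨆ j, A i j + x j

section Subeigenvector

variable {U : Fin n → Fin n → EReal} {x : Fin n → EReal}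

theorem mpPow_add_le_of_mpMulVec_le (hx : mpMulVec U x ≤ x) (m : ℕ) (i j : Fin n) :
    mpPow U m i j + x j ≤ x i := by
  induction m generalizing j with
  | zero =>
    by_cases hij : i = j <;> simp [mpPow, mpId, hij]
  | succ m ih =>
    have : Nonempty (Fin n) := ⟨i⟩
    show (⨆ k, mpPow U m i k + U k j) + x j ≤ x i
    rw [EReal.iSup_add_of_finite]
    refine iSup_le fun k => ?_
    calc mpPow U m i k + U k j + x j = mpPow U m i k + (U k j + x j) := add_assoc _ _ _
      _ ≤ mpPow U m i k + x k := by gcongr; exact (le_iSup (fun j => U k j + x j) j).trans (hx k)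
      _ ≤ x i := ih k

theorem mpMulVec_mpStar_le (hx : mpMulVec U x ≤ x) : mpMulVec (mpStar U) x ≤ x := by
  intro i
  have : Nonempty (Fin n) := ⟨i⟩
  refine iSup_le fun j => ?_
  show (⨆ m : Fin n, mpPow U m i j) + x j ≤ x i
  rw [EReal.iSup_add_of_finite]
  exact iSup_le fun m => mpPow_add_le_of_mpMulVec_le hx m i j

end Subeigenvector

noncomputable def walkWeight (U : Fin n → Fin n → EReal) (f : ℕ → Fin n) (m : ℕ) : EReal :=
  ∑ t ∈ range m, U (f t) (f (t + 1))

def NonposCycles (U : Fin n → Fin n → EReal) : Prop :=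
  ∀ (k : ℕ) (f : ℕ → Fin n), 0 < k → f k = f 0 → walkWeight U f k ≤ 0

section Walks

variable {U : Fin n → Fin n → EReal}

theorem walkWeight_succ (f : ℕ → Fin n) (m : ℕ) :
    walkWeight U f (m + 1) = walkWeight U f m + U (f m) (f (m + 1)) :=
  sum_range_succ _ _

theorem walkWeight_add (f : ℕ → Fin n) (a b : ℕ) :
    walkWeight U f (a + b) = walkWeight U f a + walkWeight U (fun t => f (a + t)) b :=
  sum_range_add _ _ _

theorem walkWeight_congr {f f' : ℕ → Fin n} {m : ℕ} (h : ∀ t ≤ m, f t = f' t) :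
    walkWeight U f m = walkWeight U f' m :=
  sum_congr rfl fun t ht => by
    have := mem_range.1 ht
    rw [h t (by omega), h (t + 1) (by omega)]

theorem walkWeight_le_mpPow (f : ℕ → Fin n) (m : ℕ) :
    walkWeight U f m ≤ mpPow U m (f 0) (f m) := by
  induction m with
  | zero => simp [walkWeight, mpPow, mpId]
  | succ m ih =>
    rw [walkWeight_succ]
    exact (add_le_add_left ih _).trans (le_iSup (fun k => mpPow U m (f 0) k + U k (f (m + 1))) _)

theorem mpPow_eq_bot_or_exists_walk (m : ℕ) (i j : Fin n) :
    mpPow U m i j = ⊥ ∨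
      ∃ f : ℕ → Fin n, f 0 = i ∧ f m = j ∧ walkWeight U f m = mpPow U m i j := by
  induction m generalizing j with
  | zero =>
    by_cases hij : i = j
    · exact .inr ⟨fun _ => i, rfl, hij, by simp [walkWeight, mpPow, mpId, hij]⟩
    · exact .inl (by simp [mpPow, mpId, hij])
  | succ m ih =>
    have : Nonempty (Fin n) := ⟨i⟩
    obtain ⟨k, hk⟩ := exists_eq_ciSup_of_finite (f := fun k => mpPow U m i k + U k j)
    change mpPow U m i k + U k j = mpPow U (m + 1) i j at hk
    rcases ih k with hbot | ⟨f, hf0, hfm, hf⟩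
    · exact .inl (by rw [← hk, hbot, EReal.bot_add])
    · refine .inr ⟨fun t => if t ≤ m then f t else j, by simpa using hf0, by simp, ?_⟩
      rw [walkWeight_succ, ← hk, ← hf, walkWeight_congr fun t ht => if_pos ht]
      simp [hfm]

theorem exists_repeated_vertex (f : ℕ → Fin n) :
    ∃ a d, 0 < d ∧ a + d ≤ n ∧ f (a + d) = f a := by
  obtain ⟨s, u, hsu, hf⟩ :=
    Fintype.exists_ne_map_eq_of_card_lt (fun v : Fin (n + 1) => f v) (by simp)
  rcases Fin.lt_or_lt_of_ne hsu with h | h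
  · exact ⟨s, u - s, by omega, by omega, by simpa [Nat.add_sub_cancel' h.le] using hf.symm⟩
  · exact ⟨u, s - u, by omega, by omega, by simpa [Nat.add_sub_cancel' h.le] using hf⟩

theorem exists_shorter_walk (hcyc : NonposCycles U) {f : ℕ → Fin n} {m : ℕ} (hm : n ≤ m) :
    ∃ m' < m, ∃ f' : ℕ → Fin n, f' 0 = f 0 ∧ f' m' = f m ∧
      walkWeight U f m ≤ walkWeight U f' m' := by
  obtain ⟨a, d, hd, had, hfa⟩ := exists_repeated_vertex f
  obtain ⟨e, rfl⟩ := Nat.exists_eq_add_of_le (hm.trans' had)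
  -- `f'` skips the closed subwalk `f a, …, f (a + d)`
  set f' : ℕ → Fin n := fun t => if t ≤ a then f t else f (t + d)
  have hshift : ∀ t, f' (a + t) = f (a + d + t) := by
    intro t
    rcases t with _ | t
    · simp [f', hfa]
    · simp only [f', if_neg (show ¬a + (t + 1) ≤ a by omega)]
      congr 1; omega
  have hcycle : walkWeight U (fun t => f (a + t)) d ≤ 0 :=
    hcyc d _ hd (by simpa using hfa)
  refine ⟨a + e, by omega, f', by simp [f'], hshift e, ?_⟩
  calc walkWeight U f (a + d + e)
      = walkWeight U f a + walkWeight U (fun t => f (a + d + t)) e +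
          walkWeight U (fun t => f (a + t)) d := by
        rw [walkWeight_add, walkWeight_add, add_right_comm]
    _ ≤ walkWeight U f a + walkWeight U (fun t => f (a + d + t)) e :=
        add_le_of_nonpos_right hcycle
    _ = walkWeight U f' (a + e) := by
        rw [walkWeight_add, walkWeight_congr (f := f') fun t ht => if_pos ht]
        simp only [hshift]

theorem walkWeight_le_mpStar (hcyc : NonposCycles U) (m : ℕ) (f : ℕ → Fin n) :
    walkWeight U f m ≤ mpStar U (f 0) (f m) := by
  induction m using Nat.strong_induction_on generalizing f with
  | _ m ih =>
    by_cases hm : m < n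
    · exact (walkWeight_le_mpPow f m).trans
        (le_iSup (fun k : Fin n => mpPow U k (f 0) (f m)) ⟨m, hm⟩)
    · obtain ⟨m', hm', f', hf0, hfm, hf⟩ := exists_shorter_walk hcyc (not_lt.1 hm)
      exact hf.trans (hf0 ▸ hfm ▸ ih m' hm' f')

theorem mpPow_le_mpStar (hcyc : NonposCycles U) (m : ℕ) (i j : Fin n) :
    mpPow U m i j ≤ mpStar U i j := by
  rcases mpPow_eq_bot_or_exists_walk m i j with hbot | ⟨f, rfl, rfl, hf⟩
  · exact hbot ▸ bot_le
  · exact hf ▸ walkWeight_le_mpStar hcyc m f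

end Walks

theorem rho_nonpos_iff {U : Fin n → Fin n → EReal} : rho U ≤ 0 ↔ NonposCycles U := by
  simp only [rho, iSup_le_iff, NonposCycles]
  refine forall_congr' fun k => ?_
  rw [forall_comm]
  refine forall_congr' fun f => forall_congr' fun hk => forall_congr' fun _ => ?_
  have hk' : (0 : EReal) < ((k : ℝ)⁻¹ : ℝ) := by exact_mod_cast inv_pos.2 (Nat.cast_pos.2 hk)
  rw [EReal.mul_nonpos_iff]
  simp [hk'.le, not_le.2 hk', walkWeight]

theorem nonposCycles_of_mpMulVec_le {U : Fin n → Fin n → EReal} {x : Fin n → ℝ}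
    (hx : mpMulVec U (fun i => (x i : EReal)) ≤ fun i => (x i : EReal)) : NonposCycles U := by
  intro k f _ hf
  have h := (add_le_add_left (walkWeight_le_mpPow (U := U) f k) _).trans
    (mpPow_add_le_of_mpMulVec_le hx k (f 0) (f k))
  rw [hf] at h
  exact (EReal.addLECancellable_coe _).add_le_add_iff_right.1 (h.trans_eq (zero_add _).symm)

section KleeneStar

variable {U : Fin n → Fin n → EReal}

theorem add_mpPow_le_mpPow_succ (m : ℕ) (i j k : Fin n) :
    U i j + mpPow U m j k ≤ mpPow U (m + 1) i k := by
  induction m generalizing k with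
  | zero =>
    by_cases hjk : j = k
    · subst hjk
      simpa [mpPow, mpMul, mpId] using le_iSup (fun l => mpId n i l + U l j) i
    · simp [mpPow, mpId, hjk]
  | succ m ih =>
    have : Nonempty (Fin n) := ⟨i⟩
    show U i j + ⨆ l, mpPow U m j l + U l k ≤ ⨆ l, mpPow U (m + 1) i l + U l k
    rw [EReal.add_iSup_of_finite]
    refine iSup_mono fun l => ?_
    rw [← add_assoc]
    exact add_le_add_left (ih l) _

theorem add_mpStar_le_mpStar (hcyc : NonposCycles U) (i j k : Fin n) :
    U i j + mpStar U j k ≤ mpStar U i k := by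
  have : Nonempty (Fin n) := ⟨i⟩
  show U i j + ⨆ m : Fin n, mpPow U m j k ≤ mpStar U i k
  rw [EReal.add_iSup_of_finite]
  exact iSup_le fun m => (add_mpPow_le_mpPow_succ m i j k).trans (mpPow_le_mpStar hcyc _ i k)

theorem mpMulVec_mpMulVec_mpStar_le (hcyc : NonposCycles U) (z : Fin n → EReal) :
    mpMulVec U (mpMulVec (mpStar U) z) ≤ mpMulVec (mpStar U) z := by
  intro i
  have : Nonempty (Fin n) := ⟨i⟩
  refine iSup_le fun j => ?_
  show U i j + ⨆ k, mpStar U j k + z k ≤ ⨆ k, mpStar U i k + z k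
  rw [EReal.add_iSup_of_finite]
  refine iSup_mono fun k => ?_
  rw [← add_assoc]
  exact add_le_add_left (add_mpStar_le_mpStar hcyc i j k) _

theorem le_mpMulVec_mpStar (U : Fin n → Fin n → EReal) (z : Fin n → EReal) :
    z ≤ mpMulVec (mpStar U) z := by
  intro i
  have h0 : (0 : EReal) ≤ mpStar U i i := by
    simpa [mpStar, mpPow, mpId] using le_iSup (fun k : Fin n => mpPow U k i i) ⟨0, i.pos⟩
  calc z i ≤ mpStar U i i + z i := le_add_of_nonneg_left h0
    _ ≤ mpMulVec (mpStar U) z i := le_iSup (fun k => mpStar U i k + z k) i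

theorem mpPow_ne_top (hU : ∀ i j, U i j ≠ ⊤) (m : ℕ) (i j : Fin n) : mpPow U m i j ≠ ⊤ := by
  induction m generalizing j with
  | zero => by_cases hij : i = j <;> simp [mpPow, mpId, hij]
  | succ m ih => exact EReal.iSup_ne_top_of_finite fun k => (EReal.add_lt_top (ih k) (hU k j)).ne

theorem mpStar_ne_top (hU : ∀ i j, U i j ≠ ⊤) (i j : Fin n) : mpStar U i j ≠ ⊤ :=
  EReal.iSup_ne_top_of_finite fun m => mpPow_ne_top hU m i j

end KleeneStar

theorem exists_real_between_mpMulVec_le {U : Fin n → Fin n → EReal} {g h : Fin n → EReal}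
    (hU : ∀ i j, U i j ≠ ⊤) (hcyc : NonposCycles U) (hg : ∀ i, g i ≠ ⊤) (hh : ∀ i, h i ≠ ⊥)
    (hgh : mpMulVec (mpStar U) g ≤ h) :
    ∃ x : Fin n → ℝ, ∀ i, g i ≤ (x i : EReal) ∧ (x i : EReal) ≤ h i ∧
      mpMulVec U (fun j => (x j : EReal)) i ≤ (x i : EReal) := by
  obtain ⟨t, ht⟩ : ∃ t : ℝ, ∀ i j, mpStar U i j + t ≤ h i :=
    (eventually_all.2 fun i => eventually_all.2 fun j =>
      EReal.eventually_add_coe_le (mpStar_ne_top hU i j) (hh i)).exists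
  set z : Fin n → EReal := g ⊔ fun _ => (t : EReal)
  set y := mpMulVec (mpStar U) z
  have hzy : z ≤ y := le_mpMulVec_mpStar U z
  have hyh : y ≤ h := fun i => iSup_le fun j => by
    change mpStar U i j + (g j ⊔ t) ≤ h i
    rw [(add_right_mono (a := mpStar U i j)).map_sup]
    exact sup_le ((le_iSup (fun j => mpStar U i j + g j) j).trans (hgh i)) (ht i j)
  have hz_top : ∀ j, z j ≠ ⊤ := fun j => (sup_lt_iff.2 ⟨(hg j).lt_top, EReal.coe_lt_top t⟩).ne
  have hy_top : ∀ i, y i ≠ ⊤ := fun i => EReal.iSup_ne_top_of_finite fun j =>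
    (EReal.add_lt_top (mpStar_ne_top hU i j) (hz_top j)).ne
  have hy_bot : ∀ i, y i ≠ ⊥ := fun i =>
    ne_bot_of_le_ne_bot (EReal.coe_ne_bot t) ((le_sup_right : _ ≤ z i).trans (hzy i))
  obtain ⟨x, hx⟩ : ∃ x : Fin n → ℝ, ∀ i, (x i : EReal) = y i :=
    ⟨fun i => (y i).toReal, fun i => EReal.coe_toReal (hy_top i) (hy_bot i)⟩
  refine ⟨x, fun i => ?_⟩
  simp only [hx]
  exact ⟨le_sup_left.trans (hzy i), hyh i, mpMulVec_mpMulVec_mpStar_le hcyc z i⟩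

end

/-- The alcoved polyhedron `P = {x ∈ ℝ^n : g ≤ x ≤ h, U ⊗ x ≤ x}` is nonempty iff
`ρ(U) ≤ 0` and `U* ⊗ g ≤ h`, where `U ∈ ℝ_max^{n×n}`, `g ∈ ℝ_max^n`,
`h ∈ (ℝ ∪ {+∞})^n`. -/
theorem stmt8 (n : ℕ) (U : Fin n → Fin n → EReal) (g h : Fin n → EReal)
    (hU : ∀ i j, U i j ≠ ⊤) (hg : ∀ i, g i ≠ ⊤) (hh : ∀ i, h i ≠ ⊥) :
    (∃ x : Fin n → ℝ, ∀ i, g i ≤ (x i : EReal) ∧ (x i : EReal) ≤ h i ∧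
        (⨆ j, U i j + (x j : EReal)) ≤ (x i : EReal)) ↔
    (rho U ≤ 0 ∧ ∀ i, (⨆ j, mpStar U i j + g j) ≤ h i) := by
  constructor
  · rintro ⟨x, hx⟩
    have hsub : mpMulVec U (fun i => (x i : EReal)) ≤ fun i => (x i : EReal) := fun i => (hx i).2.2
    refine ⟨rho_nonpos_iff.2 (nonposCycles_of_mpMulVec_le hsub), fun i => ?_⟩
    calc (⨆ j, mpStar U i j + g j) ≤ ⨆ j, mpStar U i j + (x j : EReal) :=
          iSup_mono fun j => add_le_add_right (hx j).1 _
      _ ≤ x i := mpMulVec_mpStar_le hsub i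
      _ ≤ h i := (hx i).2.1
  · rintro ⟨hρ, hgh⟩
    exact exists_real_between_mpMulVec_le hU (rho_nonpos_iff.1 hρ) hg hh hgh
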